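/- arXiv:0912.0052 — 10 statements merged into one kernel-verified Lean document; each statement's English description precedes it below -/
import Mathlib

section
/- If n is a practical number, p is a prime with gcd(n, p) = 1, l is a positive integer, and σ(n) is even, then n·p^l is a Zumkeller number. -/
/-- A positive integer `n` is a Zumkeller number if the set of its positive divisors
can be partitioned into two disjoint parts whose sums are equal. -/
def Zumkeller (n : ℕ) : Prop :=
  0 < n ∧ ∃ A ⊆ n.divisors, ∑ d ∈ A, d = ∑ d ∈ n.divisors \ A, d

/-- A positive integer `n` is a half-Zumkeller number if the set of its positive proper
divisors can be partitioned into two disjoint parts whose sums are equal. -/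
def HalfZumkeller (n : ℕ) : Prop :=
  0 < n ∧ ∃ A ⊆ n.properDivisors, ∑ d ∈ A, d = ∑ d ∈ n.properDivisors \ A, d

/-- A positive integer `n` is a practical number if every positive integer less than `n`
can be written as a sum of distinct positive divisors of `n`. -/
def Practical (n : ℕ) : Prop :=
  0 < n ∧ ∀ m : ℕ, 0 < m → m < n → ∃ S ⊆ n.divisors, m = ∑ d ∈ S, d

/-- A positive integer `n` is a quasi-practical number if every positive integer
`m ≤ σ(n) - n` can be written as a sum of distinct positive divisors of `n`
excluding `n` itself. -/
def QuasiPractical (n : ℕ) : Prop :=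
  0 < n ∧ ∀ m : ℕ, 0 < m → m ≤ (∑ d ∈ n.divisors, d) - n →
    ∃ S ⊆ n.properDivisors, m = ∑ d ∈ S, d


/-!
A practical number `n` is "complete": every `m ≤ σ(n)` is a sum of distinct divisors of `n`.
When `σ(n)` is even, taking `m = σ(n)/2` shows that `n` is Zumkeller. For `m` coprime to `n`
the divisors of `n * m` are the products `a * b` with `a ∣ n`, `b ∣ m`, each obtained once, so
a set `A` of divisors of `n` with sum `σ(n)/2` yields the set `A * divisors m` of divisors of
`n * m` with sum `σ(n) σ(m)/2 = σ(n m)/2`.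
-/

open Finset
open scoped Pointwise

/-- Brown's criterion for complete sequences. -/
theorem Finset.exists_subset_sum_eq_of_le_one_add_sum_lt (S : Finset ℕ)
    (hS : ∀ x ∈ S, x ≤ 1 + ∑ y ∈ S with y < x, y) {m : ℕ} (hm : m ≤ ∑ y ∈ S, y) :
    ∃ T ⊆ S, ∑ y ∈ T, y = m := by
  induction S using Finset.induction_on_max generalizing m with
  | empty => exact ⟨∅, subset_rfl, by simp_all⟩
  | insert a s hlt ih =>
    have ha : a ∉ s := fun h => lt_irrefl a (hlt a h)
    have hs : ∀ x ∈ s, x ≤ 1 + ∑ y ∈ s with y < x, y := by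
      intro x hx
      have := hS x (mem_insert_of_mem hx)
      rwa [filter_insert, if_neg (not_lt.2 (hlt x hx).le)] at this
    have ha_le : a ≤ 1 + ∑ y ∈ s, y := by
      have := hS a (mem_insert_self a s)
      rwa [filter_insert, if_neg (lt_irrefl a), filter_true_of_mem hlt] at this
    rw [sum_insert ha] at hm
    by_cases hms : m ≤ ∑ y ∈ s, y
    · obtain ⟨T, hT, hTm⟩ := ih hs hms
      exact ⟨T, hT.trans (subset_insert a s), hTm⟩
    · obtain ⟨T, hT, hTm⟩ := ih hs (m := m - a) (by omega)
      refine ⟨insert a T, insert_subset_insert a hT, ?_⟩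
      rw [sum_insert fun h => ha (hT h)]
      omega

theorem Practical.exists_subset_divisors_sum_eq {n : ℕ} (hn : Practical n) {m : ℕ}
    (hm : m ≤ ∑ d ∈ n.divisors, d) : ∃ A ⊆ n.divisors, ∑ d ∈ A, d = m := by
  refine n.divisors.exists_subset_sum_eq_of_le_one_add_sum_lt (fun x hx => ?_) hm
  obtain ⟨hn0, hrep⟩ := hn
  have hxn : x ≤ n := Nat.divisor_le hx
  rcases Nat.lt_or_ge x 2 with hx2 | hx2
  · omega
  obtain ⟨S, hS, hSx⟩ := hrep (x - 1) (by omega) (by omega)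
  have hS_lt : S ⊆ {d ∈ n.divisors | d < x} := by
    intro d hd
    have : d ≤ ∑ e ∈ S, e := single_le_sum (f := fun e => e) (fun _ _ => Nat.zero_le _) hd
    exact mem_filter.2 ⟨hS hd, by omega⟩
  have := sum_le_sum_of_subset (f := fun e => e) hS_lt
  omega

theorem zumkeller_iff {n : ℕ} :
    Zumkeller n ↔ 0 < n ∧ ∃ A ⊆ n.divisors, 2 * ∑ d ∈ A, d = ∑ d ∈ n.divisors, d := by
  refine and_congr_right fun _ => exists_congr fun A => and_congr_right fun hA => ?_
  have := sum_sdiff hA (f := fun d => d)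
  omega

theorem Practical.zumkeller {n : ℕ} (hn : Practical n) (hσ : Even (∑ d ∈ n.divisors, d)) :
    Zumkeller n := by
  obtain ⟨k, hk⟩ := hσ
  obtain ⟨A, hA, hAk⟩ := hn.exists_subset_divisors_sum_eq (m := k) (by omega)
  exact zumkeller_iff.2 ⟨hn.1, A, hA, by omega⟩

theorem Zumkeller.mul_of_coprime {n m : ℕ} (hn : Zumkeller n) (hnm : n.Coprime m) :
    Zumkeller (n * m) := by
  obtain ⟨hn0, A, hA, hAσ⟩ := zumkeller_iff.1 hn
  have hm0 : m ≠ 0 := by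
    rintro rfl
    rw [Nat.coprime_zero_right] at hnm
    subst hnm
    rw [Nat.divisors_one, sum_singleton] at hAσ
    omega
  have hinj : Set.InjOn (fun q : ℕ × ℕ => q.1 * q.2) ↑(A ×ˢ m.divisors) :=
    hnm.mul_injOn_divisors.mono (coe_subset.2 (product_subset_product_left hA))
  refine zumkeller_iff.2 ⟨by positivity, A * m.divisors, ?_, ?_⟩
  · rw [Nat.divisors_mul]
    exact mul_subset_mul_right hA
  · rw [mul_def, sum_image hinj, sum_product, ← sum_mul_sum, ← mul_assoc, hAσ,
      Nat.Coprime.sum_divisors_mul hnm]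

theorem stmt0_general (n p l : ℕ) (hn : Practical n) (hcop : Nat.gcd n p = 1)
    (hsigma : Even (∑ d ∈ n.divisors, d)) :
    Zumkeller (n * p ^ l) :=
  (hn.zumkeller hsigma).mul_of_coprime (Nat.Coprime.pow_right l hcop)

theorem stmt0 (n p l : ℕ) (hn : Practical n) (hp : p.Prime) (hcop : Nat.gcd n p = 1)
    (hl : 0 < l) (hsigma : Even (∑ d ∈ n.divisors, d)) :
    Zumkeller (n * p ^ l) :=
  stmt0_general n p l hn hcop hsigma
end

section
/- If n is a practical number, p is a prime with gcd(n, p) = 1, l is a positive integer, and σ(n) is odd, then n·p^l is a half-Zumkeller number if and only if p ≤ σ(n) and l is odd. -/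
/-!
Call a finite set of naturals complete if every number up to its total is a subset sum. The
divisors of a practical number `n` form a complete set; adjoining `p ^ (k + 1) • divisors n` to
the divisors of `n * p ^ k` keeps it complete as long as `p ≤ σ(n) + 1`, and so does removing the
largest element. Hence for `p ≤ σ(n)` the proper divisors of `n * p ^ l` are complete, and they
split into two halves of equal sum iff their sum `σ(n) σ(p ^ l) - n * p ^ l` is even, which (`n`
being even and `p` odd) happens iff `l` is odd. Conversely, in an equal split both halves are
congruent modulo `p` to their parts coprime to `p`, which together are the divisors of `n`; if
`σ(n) < p` these two parts would have to be equal, making `σ(n)` even.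
-/

open Finset

def SubsetSumComplete (F : Finset ℕ) : Prop :=
  ∀ j ≤ ∑ d ∈ F, d, ∃ S ⊆ F, ∑ d ∈ S, d = j

-- Brown's criterion for complete sequences; peel off the largest element.
theorem subsetSumComplete_of_le_succ_sum_lt {F : Finset ℕ}
    (hF : ∀ d ∈ F, d ≤ ∑ e ∈ F with e < d, e + 1) : SubsetSumComplete F := by
  induction F using Finset.strongInduction with
  | H F ih =>
  intro j hj
  rcases F.eq_empty_or_nonempty with rfl | hne
  · rw [sum_empty, Nat.le_zero] at hj
    exact ⟨∅, empty_subset _, by rw [sum_empty, hj]⟩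
  set M := F.max' hne
  have hMF : M ∈ F := F.max'_mem hne
  have hrest : SubsetSumComplete (F.erase M) := by
    refine ih _ (erase_ssubset hMF) fun d hd => ?_
    have hdM : d ≤ M := F.le_max' d (mem_of_mem_erase hd)
    rw [filter_erase, erase_eq_of_notMem fun h => (mem_filter.1 h).2.not_ge hdM]
    exact hF d (mem_of_mem_erase hd)
  have hsplit : ∑ e ∈ F.erase M, e + M = ∑ e ∈ F, e := sum_erase_add F _ hMF
  by_cases hle : j ≤ ∑ e ∈ F.erase M, e
  · obtain ⟨S, hS, rfl⟩ := hrest j hle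
    exact ⟨S, hS.trans (erase_subset _ _), rfl⟩
  have hM : M ≤ ∑ e ∈ F.erase M, e + 1 := by
    refine (hF M hMF).trans (Nat.add_le_add_right (sum_le_sum_of_subset fun e he => ?_) 1)
    exact mem_erase.2 ⟨(mem_filter.1 he).2.ne, (mem_filter.1 he).1⟩
  obtain ⟨S, hS, hSsum⟩ := hrest (j - M) (by omega)
  refine ⟨insert M S, insert_subset hMF (hS.trans (erase_subset _ _)), ?_⟩
  rw [sum_insert fun h => (mem_erase.1 (hS h)).1 rfl]
  omega

theorem subsetSumComplete_of_forall_lt {F : Finset ℕ} {M : ℕ} (hle : ∀ d ∈ F, d ≤ M)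
    (hsum : ∀ m < M, ∃ S ⊆ F, ∑ d ∈ S, d = m) : SubsetSumComplete F := by
  refine subsetSumComplete_of_le_succ_sum_lt fun d hd => ?_
  obtain _ | d := d
  · exact Nat.zero_le _
  obtain ⟨S, hS, hSsum⟩ := hsum d (hle _ hd)
  have hSlt : S ⊆ {e ∈ F | e < d + 1} := fun e he =>
    mem_filter.2 ⟨hS he,
      Nat.lt_succ_of_le (hSsum ▸ single_le_sum_of_canonicallyOrdered (f := fun d => d) he)⟩
  calc d + 1 = ∑ e ∈ S, e + 1 := by rw [hSsum]
    _ ≤ _ := by gcongr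

theorem SubsetSumComplete.erase {F : Finset ℕ} (hF : SubsetSumComplete F) {M : ℕ} (hM : M ∈ F)
    (hle : ∀ d ∈ F, d ≤ M) : SubsetSumComplete (F.erase M) := by
  refine subsetSumComplete_of_forall_lt (fun d hd => hle d (mem_of_mem_erase hd)) fun m hm => ?_
  obtain ⟨S, hS, rfl⟩ :=
    hF _ (hm.le.trans (single_le_sum_of_canonicallyOrdered (f := fun d => d) hM))
  refine ⟨S, fun e he => mem_erase.2 ⟨?_, hS he⟩, rfl⟩
  rintro rfl
  exact hm.not_ge (single_le_sum_of_canonicallyOrdered (f := fun d => d) he)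

theorem SubsetSumComplete.properDivisors {N : ℕ} (h : SubsetSumComplete N.divisors) :
    SubsetSumComplete N.properDivisors := by
  rcases eq_or_ne N 0 with rfl | hN
  · simpa using h
  rw [← erase_insert Nat.self_notMem_properDivisors, Nat.insert_self_properDivisors hN]
  exact h.erase (Nat.mem_divisors_self N hN) fun d hd => Nat.divisor_le hd

theorem SubsetSumComplete.union_image_mul {T S : Finset ℕ} {P : ℕ} (hT : SubsetSumComplete T)
    (hS : SubsetSumComplete S) (hP : 0 < P) (hPT : P ≤ ∑ d ∈ T, d + 1)
    (hdisj : Disjoint T (S.image (· * P))) : SubsetSumComplete (T ∪ S.image (· * P)) := by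
  have hsum_image (U : Finset ℕ) : ∑ d ∈ U.image (· * P), d = (∑ d ∈ U, d) * P := by
    rw [sum_image fun a _ b _ h => Nat.eq_of_mul_eq_mul_right hP h, sum_mul]
  suffices h : ∀ q ≤ ∑ d ∈ S, d, ∀ r ≤ ∑ d ∈ T, d,
      ∃ U ⊆ T ∪ S.image (· * P), ∑ d ∈ U, d = q * P + r by
    intro j hj
    rw [sum_union hdisj, hsum_image S] at hj
    rcases le_total (j / P) (∑ d ∈ S, d) with hq | hq
    · have := Nat.mod_lt j hP
      simpa only [Nat.div_add_mod'] using h (j / P) hq (j % P) (by omega)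
    · have : (∑ d ∈ S, d) * P ≤ j :=
        (Nat.mul_le_mul_right P hq).trans (Nat.div_mul_le_self j P)
      obtain ⟨U, hU, hUsum⟩ := h _ le_rfl (j - (∑ d ∈ S, d) * P) (by omega)
      exact ⟨U, hU, by omega⟩
  intro q hq r hr
  obtain ⟨U, hU, rfl⟩ := hS q hq
  obtain ⟨V, hV, rfl⟩ := hT r hr
  refine ⟨V ∪ U.image (· * P), union_subset_union hV (image_subset_image hU), ?_⟩
  rw [sum_union (hdisj.mono hV (image_subset_image hU)), hsum_image U, add_comm]

theorem Nat.divisors_mul_prime_pow_succ {n p : ℕ} (hp : p.Prime) (l : ℕ) :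
    (n * p ^ (l + 1)).divisors = (n * p ^ l).divisors ∪ n.divisors.image (· * p ^ (l + 1)) := by
  ext d
  simp only [mem_union, mem_image, Nat.mem_divisors]
  constructor
  · rintro ⟨hd, hN⟩
    have hn : n ≠ 0 := left_ne_zero_of_mul hN
    obtain ⟨a, b, ha, hb, rfl⟩ := Nat.dvd_mul.1 hd
    obtain ⟨k, hk, rfl⟩ := (Nat.dvd_prime_pow hp).1 hb
    rcases hk.lt_or_eq with hk | rfl
    · exact .inl ⟨mul_dvd_mul ha (pow_dvd_pow p (by omega)),
        mul_ne_zero hn (pow_ne_zero _ hp.ne_zero)⟩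
    · exact .inr ⟨a, ⟨ha, hn⟩, rfl⟩
  · rintro (⟨hd, hN⟩ | ⟨a, ⟨ha, hn⟩, rfl⟩)
    · exact ⟨hd.trans (mul_dvd_mul_left n (pow_dvd_pow p l.le_succ)),
        mul_ne_zero (left_ne_zero_of_mul hN) (pow_ne_zero _ hp.ne_zero)⟩
    · exact ⟨mul_dvd_mul_right ha _, mul_ne_zero hn (pow_ne_zero _ hp.ne_zero)⟩

theorem Nat.disjoint_divisors_mul_prime_pow_image {n p : ℕ} (hp : p.Prime) (hcop : n.Coprime p)
    (l : ℕ) : Disjoint (n * p ^ l).divisors (n.divisors.image (· * p ^ (l + 1))) := by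
  refine disjoint_left.2 fun x hx hx' => ?_
  obtain ⟨a, -, rfl⟩ := mem_image.1 hx'
  have hdvd : p ^ (l + 1) ∣ p ^ l :=
    ((hcop.pow_right (l + 1)).symm).dvd_of_dvd_mul_left
      ((dvd_mul_left _ a).trans (Nat.dvd_of_mem_divisors hx))
  exact Nat.not_succ_le_self l ((Nat.pow_dvd_pow_iff_le_right hp.one_lt).1 hdvd)

theorem SubsetSumComplete.divisors_mul_prime_pow {n p : ℕ} (hn : SubsetSumComplete n.divisors)
    (hp : p.Prime) (hcop : n.Coprime p) (hpσ : p ≤ ∑ d ∈ n.divisors, d + 1) (l : ℕ) :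
    SubsetSumComplete (n * p ^ l).divisors := by
  induction l with
  | zero => simpa using hn
  | succ l ih =>
  rw [Nat.divisors_mul_prime_pow_succ hp]
  refine ih.union_image_mul hn (pow_pos hp.pos _) ?_
    (Nat.disjoint_divisors_mul_prime_pow_image hp hcop l)
  have hgeom := geom_sum_mul_add (p - 1) (l + 1)
  rw [Nat.sub_add_cancel hp.one_le] at hgeom
  rw [(hcop.pow_right l).sum_divisors_mul, Nat.sum_divisors_prime_pow hp, ← hgeom, mul_comm]
  gcongr
  omega

theorem Nat.sum_filter_not_dvd_modEq (p : ℕ) (X : Finset ℕ) :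
    ∑ x ∈ X with ¬ p ∣ x, x ≡ ∑ x ∈ X, x [MOD p] := by
  conv_rhs => rw [← sum_filter_add_sum_filter_not X (fun x => ¬ p ∣ x)]
  obtain ⟨k, hk⟩ : p ∣ ∑ x ∈ X with ¬¬ p ∣ x, x :=
    dvd_sum fun x hx => not_not.1 (mem_filter.1 hx).2
  rw [hk]
  exact (Nat.add_mul_mod_self_left _ _ _).symm

theorem Nat.filter_not_dvd_properDivisors_mul_prime_pow {n p l : ℕ} (hp : p.Prime)
    (hcop : n.Coprime p) (hn : n ≠ 0) (hl : l ≠ 0) :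
    {d ∈ (n * p ^ l).properDivisors | ¬ p ∣ d} = n.divisors := by
  ext d
  simp only [mem_filter, Nat.mem_properDivisors, Nat.mem_divisors, ne_eq, hn, not_false_eq_true,
    and_true]
  constructor
  · rintro ⟨⟨hd, -⟩, hpd⟩
    exact (((hp.coprime_iff_not_dvd.2 hpd).symm).pow_right l).dvd_of_dvd_mul_right hd
  · intro hd
    refine ⟨⟨hd.mul_right _, (Nat.le_of_dvd (Nat.pos_of_ne_zero hn) hd).trans_lt ?_⟩,
      fun hpd => ?_⟩
    · exact lt_mul_of_one_lt_right (Nat.pos_of_ne_zero hn) (Nat.one_lt_pow hl hp.one_lt)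
    · exact hp.one_lt.ne' (Nat.eq_one_of_dvd_coprimes hcop (hpd.trans hd) dvd_rfl)

theorem HalfZumkeller.even_sum_properDivisors {N : ℕ} (h : HalfZumkeller N) :
    Even (∑ d ∈ N.properDivisors, d) := by
  obtain ⟨-, A, hA, hsum⟩ := h
  rw [← sum_sdiff hA, ← hsum]
  exact Even.add_self _

theorem HalfZumkeller.prime_le_sum_divisors {n p l : ℕ} (h : HalfZumkeller (n * p ^ l))
    (hp : p.Prime) (hcop : n.Coprime p) (hl : l ≠ 0) (hσ : Odd (∑ d ∈ n.divisors, d)) :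
    p ≤ ∑ d ∈ n.divisors, d := by
  obtain ⟨hN, A, hA, hsum⟩ := h
  set B := (n * p ^ l).properDivisors \ A
  have hsplit :
      ∑ d ∈ A with ¬ p ∣ d, d + ∑ d ∈ B with ¬ p ∣ d, d = ∑ d ∈ n.divisors, d := by
    rw [← sum_union (disjoint_sdiff.mono (filter_subset _ _) (filter_subset _ _)),
      ← filter_union, union_sdiff_of_subset hA,
      Nat.filter_not_dvd_properDivisors_mul_prime_pow hp hcop (left_ne_zero_of_mul hN.ne') hl]
  have hmod : ∑ d ∈ A with ¬ p ∣ d, d ≡ ∑ d ∈ B with ¬ p ∣ d, d [MOD p] :=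
    (Nat.sum_filter_not_dvd_modEq p A).trans (hsum ▸ (Nat.sum_filter_not_dvd_modEq p B).symm)
  by_contra! hlt
  rw [← hsplit, hmod.eq_of_lt_of_lt (by omega) (by omega)] at hσ
  exact Nat.not_even_iff_odd.2 hσ (Even.add_self _)

theorem SubsetSumComplete.exists_sum_eq_sum_sdiff {F : Finset ℕ} (hF : SubsetSumComplete F)
    (heven : Even (∑ d ∈ F, d)) : ∃ A ⊆ F, ∑ d ∈ A, d = ∑ d ∈ F \ A, d := by
  obtain ⟨k, hk⟩ := heven
  obtain ⟨A, hA, hsum⟩ := hF k (by omega)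
  have := sum_sdiff hA (f := fun d => d)
  exact ⟨A, hA, by omega⟩

theorem Practical.subsetSumComplete_divisors {n : ℕ} (hn : Practical n) :
    SubsetSumComplete n.divisors := by
  refine subsetSumComplete_of_forall_lt (fun d hd => Nat.divisor_le hd) fun m hm => ?_
  rcases m.eq_zero_or_pos with rfl | hm0
  · exact ⟨∅, empty_subset _, sum_empty⟩
  · obtain ⟨S, hS, rfl⟩ := hn.2 m hm0 hm
    exact ⟨S, hS, rfl⟩

theorem Practical.even {n : ℕ} (hn : Practical n) (h1 : 1 < n) : Even n := by
  obtain rfl | h2 := (Nat.succ_le_of_lt h1).eq_or_lt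
  · exact even_two
  obtain ⟨S, hS, hsum⟩ := hn.2 2 two_pos h2
  by_contra hodd
  have hS1 : S ⊆ {1} := fun d hd => by
    obtain ⟨hdn, hn0⟩ := Nat.mem_divisors.1 (hS hd)
    have : d ≤ 2 := hsum ▸ single_le_sum_of_canonicallyOrdered (f := fun d => d) hd
    have : d ≠ 0 := ne_zero_of_dvd_ne_zero hn0 hdn
    have : d ≠ 2 := fun h => hodd (even_iff_two_dvd.2 (h ▸ hdn))
    rw [mem_singleton]
    omega
  have := sum_le_sum_of_subset (f := fun d => d) hS1
  rw [sum_singleton, ← hsum] at this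
  omega

theorem Nat.even_sum_divisors_prime_pow_iff {p : ℕ} (hp : p.Prime) (hodd : Odd p) (l : ℕ) :
    Even (∑ d ∈ (p ^ l).divisors, d) ↔ Odd l := by
  rw [Nat.sum_divisors_prime_pow hp, even_sum_iff_even_card_odd,
    filter_true_of_mem fun i _ => hodd.pow, card_range, Nat.even_add_one, Nat.not_even_iff_odd]

theorem even_sum_properDivisors_mul_prime_pow_iff {n p : ℕ} (hn : Even n)
    (hσ : Odd (∑ d ∈ n.divisors, d)) (hp : p.Prime) (hodd : Odd p) (hcop : n.Coprime p)
    (l : ℕ) :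
    Even (∑ d ∈ (n * p ^ l).properDivisors, d) ↔ Odd l :=
  calc Even (∑ d ∈ (n * p ^ l).properDivisors, d)
      ↔ Even (∑ d ∈ (n * p ^ l).properDivisors, d + n * p ^ l) := by
        simp [Nat.even_add, hn.mul_right]
    _ ↔ Even ((∑ d ∈ n.divisors, d) * ∑ d ∈ (p ^ l).divisors, d) := by
        rw [← Nat.sum_divisors_eq_sum_properDivisors_add_self,
          (hcop.pow_right l).sum_divisors_mul]
    _ ↔ Even (∑ d ∈ (p ^ l).divisors, d) := by simp [Nat.even_mul, Nat.not_even_iff_odd.2 hσ]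
    _ ↔ Odd l := Nat.even_sum_divisors_prime_pow_iff hp hodd l

theorem stmt5 (n p l : ℕ) (hn : Practical n) (hp : p.Prime) (hcop : Nat.gcd n p = 1)
    (hl : 0 < l) (hsigma : Odd (∑ d ∈ n.divisors, d)) :
    HalfZumkeller (n * p ^ l) ↔ p ≤ (∑ d ∈ n.divisors, d) ∧ Odd l := by
  have hparity (hpσ : p ≤ ∑ d ∈ n.divisors, d) :
      Even (∑ d ∈ (n * p ^ l).properDivisors, d) ↔ Odd l := by
    have hn1 : 1 < n := by
      by_contra! h
      obtain rfl : n = 1 := by have := hn.1; omega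
      simp only [Nat.divisors_one, sum_singleton] at hpσ
      exact hp.one_lt.not_ge hpσ
    have hn_even := hn.even hn1
    have hp_odd : Odd p := hp.odd_of_ne_two <| by
      rintro rfl
      exact absurd (Nat.eq_one_of_dvd_coprimes hcop (even_iff_two_dvd.1 hn_even) dvd_rfl)
        (by norm_num)
    exact even_sum_properDivisors_mul_prime_pow_iff hn_even hsigma hp hp_odd hcop l
  constructor
  · intro h
    have hpσ := h.prime_le_sum_divisors hp hcop hl.ne' hsigma
    exact ⟨hpσ, (hparity hpσ).1 h.even_sum_properDivisors⟩
  · rintro ⟨hpσ, hl_odd⟩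
    have hcomplete :=
      (hn.subsetSumComplete_divisors.divisors_mul_prime_pow hp hcop (by omega) l).properDivisors
    exact ⟨Nat.mul_pos hn.1 (pow_pos hp.pos l),
      hcomplete.exists_sum_eq_sum_sdiff ((hparity hpσ).2 hl_odd)⟩
end

section
/- Every practical number is a quasi-practical number. -/
namespace Finset

theorem exists_subset_sum_eq_of_forall_le_one_add_sum_lt (T : Finset ℕ)
    (hT : ∀ d ∈ T, d ≤ 1 + ∑ e ∈ T with e < d, e) {m : ℕ} (hm : m ≤ ∑ d ∈ T, d) :
    ∃ S ⊆ T, ∑ d ∈ S, d = m := by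
  induction T using Finset.induction_on_max generalizing m with
  | empty => exact ⟨∅, empty_subset _, by simp_all⟩
  | insert a s hlt ih =>
    have ha : a ∉ s := fun h => (hlt a h).false
    have hs : ∀ d ∈ s, d ≤ 1 + ∑ e ∈ s with e < d, e := by
      intro d hd
      have hfilter : ({e ∈ insert a s | e < d} : Finset ℕ) = {e ∈ s | e < d} := by
        rw [filter_insert, if_neg (hlt d hd).not_gt]
      simpa [hfilter] using hT d (mem_insert_of_mem hd)
    have has : a ≤ 1 + ∑ e ∈ s, e := by
      have hfilter : ({e ∈ insert a s | e < a} : Finset ℕ) = s := by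
        rw [filter_insert, if_neg (lt_irrefl a), filter_true_of_mem hlt]
      simpa [hfilter] using hT a (mem_insert_self a s)
    rw [sum_insert ha] at hm
    by_cases hms : m ≤ ∑ e ∈ s, e
    · obtain ⟨S, hSs, hS⟩ := ih hs hms
      exact ⟨S, hSs.trans (subset_insert a s), hS⟩
    · obtain ⟨S, hSs, hS⟩ := ih hs (m := m - a) (by omega)
      refine ⟨insert a S, insert_subset_insert a hSs, ?_⟩
      rw [sum_insert fun h => ha (hSs h), hS]
      omega

end Finset

theorem Practical.le_one_add_sum_properDivisors_lt {n d : ℕ} (hn : Practical n)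
    (hd : d ∈ n.properDivisors) : d ≤ 1 + ∑ e ∈ n.properDivisors with e < d, e := by
  obtain ⟨hdn, hdlt⟩ := Nat.mem_properDivisors.mp hd
  obtain hd1 | hd1 := le_or_gt d 1
  · omega
  obtain ⟨S, hSn, hS⟩ := hn.2 (d - 1) (by omega) (by omega)
  have hSd : S ⊆ {e ∈ n.properDivisors | e < d} := by
    intro e he
    have hle : e ≤ d - 1 := hS ▸ Finset.single_le_sum (fun i _ => Nat.zero_le i) he
    exact Finset.mem_filter.mpr
      ⟨Nat.mem_properDivisors.mpr ⟨Nat.dvd_of_mem_divisors (hSn he), by omega⟩, by omega⟩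
  have : ∑ e ∈ S, e ≤ ∑ e ∈ n.properDivisors with e < d, e := Finset.sum_le_sum_of_subset hSd
  omega

theorem stmt7 (n : ℕ) (hn : Practical n) : QuasiPractical n := by
  refine ⟨hn.1, fun m _ hm => ?_⟩
  rw [Nat.sum_divisors_eq_sum_properDivisors_add_self, Nat.add_sub_cancel] at hm
  obtain ⟨S, hS, hSm⟩ := n.properDivisors.exists_subset_sum_eq_of_forall_le_one_add_sum_lt
    (fun _ hd => hn.le_one_add_sum_properDivisors_lt hd) hm
  exact ⟨S, hS, hSm.symm⟩
end

section
/- Let l be a positive integer, let n be a positive integer that is not a Zumkeller number, and let p be a prime with gcd(n, p) = 1. If n·p^l is a Zumkeller number, then p ≤ σ(n); moreover, if additionally σ(n) is odd, then l is odd. -/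
/-!
The divisors of `n * p ^ l` not divisible by `p` are exactly the divisors of `n`, and the others
vanish modulo `p`. So a Zumkeller partition of `n * p ^ l` restricts to a partition of the
divisors of `n` whose two sums agree modulo `p`; both sums are at most `σ(n)`, so if `σ(n) < p`
they are equal and `n` is Zumkeller. For the parity claim, `σ(n * p ^ l) = σ(n) (1 + p + ⋯ + p ^ l)`
is even, so when `σ(n)` is odd the geometric sum is even, which forces `p` odd and `l + 1` even.
-/

open Finset

theorem Nat.sum_modEq_sum_filter_not_dvd (p : ℕ) (s : Finset ℕ) :
    ∑ a ∈ s, a ≡ ∑ a ∈ s with ¬p ∣ a, a [MOD p] := by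
  have hdvd : ∑ a ∈ s with p ∣ a, a ≡ 0 [MOD p] :=
    Nat.modEq_zero_iff_dvd.mpr (dvd_sum fun a ha => (mem_filter.mp ha).2)
  rw [← sum_filter_add_sum_filter_not s (p ∣ ·)]
  simpa using hdvd.add_right (∑ a ∈ s with ¬p ∣ a, a)

theorem Nat.filter_not_dvd_divisors_mul_prime_pow {n p : ℕ} (hp : p.Prime) (hcop : n.Coprime p)
    (l : ℕ) : (n * p ^ l).divisors.filter (¬p ∣ ·) = n.divisors := by
  ext d
  simp only [mem_filter, Nat.mem_divisors, mul_ne_zero_iff, ne_eq, pow_eq_zero_iff',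
    hp.ne_zero, false_and, not_false_eq_true, and_true]
  constructor
  · rintro ⟨⟨hd, hn⟩, hpd⟩
    exact ⟨((hp.coprime_iff_not_dvd.mpr hpd).symm.pow_right l).dvd_of_dvd_mul_right hd, hn⟩
  · rintro ⟨hd, hn⟩
    exact ⟨⟨hd.mul_right _, hn⟩, fun hpd => hp.one_lt.ne' (Nat.eq_one_of_dvd_coprimes hcop
      (hpd.trans hd) dvd_rfl)⟩

theorem Zumkeller.even_sum_divisors {n : ℕ} (hz : Zumkeller n) : Even (∑ d ∈ n.divisors, d) := by
  obtain ⟨-, A, hA, hsum⟩ := hz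
  rw [← sum_sdiff hA, ← hsum]
  exact ⟨_, rfl⟩

theorem Zumkeller.of_mul_prime_pow {n p l : ℕ} (hp : p.Prime) (hcop : n.Coprime p)
    (hz : Zumkeller (n * p ^ l)) (hlt : ∑ d ∈ n.divisors, d < p) : Zumkeller n := by
  obtain ⟨hpos, A, hA, hsum⟩ := hz
  have hdiv := Nat.filter_not_dvd_divisors_mul_prime_pow hp hcop l
  have hB : A.filter (¬p ∣ ·) ⊆ n.divisors := hdiv ▸ filter_subset_filter _ hA
  have hcompl : ((n * p ^ l).divisors \ A).filter (¬p ∣ ·) = n.divisors \ A.filter (¬p ∣ ·) := by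
    rw [← hdiv]; ext; simp only [mem_filter, mem_sdiff]; tauto
  have hmod : ∑ d ∈ A.filter (¬p ∣ ·), d ≡ ∑ d ∈ n.divisors \ A.filter (¬p ∣ ·), d [MOD p] := by
    rw [← hcompl]
    calc ∑ d ∈ A.filter (¬p ∣ ·), d ≡ ∑ d ∈ A, d [MOD p] :=
          (Nat.sum_modEq_sum_filter_not_dvd p A).symm
      _ = ∑ d ∈ (n * p ^ l).divisors \ A, d := hsum
      _ ≡ _ [MOD p] := Nat.sum_modEq_sum_filter_not_dvd p _
  refine ⟨Nat.pos_of_mul_pos_right hpos, _, hB, hmod.eq_of_lt_of_lt ?_ ?_⟩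
  · exact (sum_le_sum_of_subset hB).trans_lt hlt
  · exact (sum_le_sum_of_subset sdiff_subset).trans_lt hlt

theorem Nat.odd_of_even_sum_range_succ_pow {p l : ℕ} (h : Even (∑ i ∈ range (l + 1), p ^ i)) :
    Odd l := by
  rw [← ZMod.natCast_eq_zero_iff_even] at h
  push_cast at h
  rcases Nat.even_or_odd p with hp | hp
  · rw [(ZMod.natCast_eq_zero_iff_even).mpr hp] at h
    simp [sum_range_succ'] at h
  · rw [(ZMod.natCast_eq_one_iff_odd).mpr hp] at h
    simp only [one_pow, sum_const, card_range, nsmul_eq_mul, mul_one] at h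
    exact Nat.not_even_iff_odd.mp
      (Nat.even_add_one.mp ((ZMod.natCast_eq_zero_iff_even).mp (by exact_mod_cast h)))

theorem stmt12_general (n p l : ℕ) (hnz : ¬ Zumkeller n)
    (hp : p.Prime) (hcop : Nat.gcd n p = 1) (hz : Zumkeller (n * p ^ l)) :
    p ≤ (∑ d ∈ n.divisors, d) ∧ (Odd (∑ d ∈ n.divisors, d) → Odd l) := by
  refine ⟨not_lt.mp fun hlt => hnz (hz.of_mul_prime_pow hp hcop hlt), fun hodd => ?_⟩
  have heven := hz.even_sum_divisors
  rw [Nat.Coprime.sum_divisors_mul (Nat.Coprime.pow_right l hcop), Nat.sum_divisors_prime_pow hp,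
    Nat.even_mul] at heven
  exact Nat.odd_of_even_sum_range_succ_pow (heven.resolve_left (Nat.not_even_iff_odd.mpr hodd))

theorem stmt12 (n p l : ℕ) (hl : 0 < l) (hn : 0 < n) (hnz : ¬ Zumkeller n)
    (hp : p.Prime) (hcop : Nat.gcd n p = 1) (hz : Zumkeller (n * p ^ l)) :
    p ≤ (∑ d ∈ n.divisors, d) ∧ (Odd (∑ d ∈ n.divisors, d) → Odd l) :=
  stmt12_general n p l hnz hp hcop hz
end

section
/- Let n be a positive integer and let 1 = a_1 < a_2 < ... < a_k = n be the increasing list of all positive divisors of n. If a_{i+1} ≤ 2·a_i for every i with 1 ≤ i ≤ k−1 and σ(n) is even, then n is a Zumkeller number. -/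
/-!
Sort the divisors as `1 = a₁ < ⋯ < a_k = n`. The doubling condition makes this sequence
complete: `a_{i+1} ≤ 2 aᵢ ≤ aᵢ + (1 + a₁ + ⋯ + a_{i-1})`, so every term is at most one more
than the sum of the earlier ones. For a complete sequence every `m ≤ a₁ + ⋯ + a_k` is a sum
of distinct terms (use the last term exactly when `m` exceeds the sum of the others).
Taking `m = σ(n) / 2` splits the divisors into two halves of equal sum.
-/

namespace List

theorem exists_sublist_sum_eq_of_getElem_le_succ_sum_take {l : List ℕ}
    (hl : ∀ i (h : i < l.length), l[i] ≤ 1 + (l.take i).sum) :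
    ∀ m ≤ l.sum, ∃ s, s <+ l ∧ s.sum = m := by
  induction l using List.reverseRecOn with
  | nil => exact fun m hm => ⟨[], .slnil, by simpa using (hm.antisymm (Nat.zero_le m)).symm⟩
  | append_singleton t a ih =>
    have ht : ∀ i (h : i < t.length), t[i] ≤ 1 + (t.take i).sum := fun i hi => by
      have := hl i (by simp; omega)
      rwa [getElem_append_left hi, take_append_of_le_length hi.le] at this
    have ha : a ≤ 1 + t.sum := by simpa using hl t.length (by simp)
    intro m hm
    rw [sum_append, sum_singleton] at hm
    by_cases hmt : m ≤ t.sum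
    · obtain ⟨s, hs, rfl⟩ := ih ht m hmt
      exact ⟨s, hs.trans (sublist_append_left t [a]), rfl⟩
    · obtain ⟨s, hs, hsum⟩ := ih ht (m - a) (by omega)
      exact ⟨s ++ [a], hs.append (.refl _), by simp [hsum]; omega⟩

theorem getElem_le_succ_sum_take_of_getElem_succ_le_two_mul {l : List ℕ}
    (h₀ : ∀ h : 0 < l.length, l[0] ≤ 1)
    (h : ∀ i (hi : i + 1 < l.length), l[i + 1] ≤ 2 * l[i]) :
    ∀ i (hi : i < l.length), l[i] ≤ 1 + (l.take i).sum
  | 0, hi => by simpa using h₀ hi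
  | i + 1, hi => by
    have ih := getElem_le_succ_sum_take_of_getElem_succ_le_two_mul h₀ h i (by omega)
    rw [sum_take_succ _ _ (by omega)]
    have := h i hi
    omega

end List

namespace Finset

theorem sum_sort (s : Finset ℕ) : (s.sort (· ≤ ·)).sum = ∑ d ∈ s, d :=
  (sort_perm_toList s _).sum_eq.trans (sum_toList s)

theorem exists_subset_sum_eq_of_getElem_sort_le {s : Finset ℕ}
    (hs : ∀ i (h : i < (s.sort (· ≤ ·)).length),
      (s.sort (· ≤ ·))[i] ≤ 1 + ((s.sort (· ≤ ·)).take i).sum)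
    {m : ℕ} (hm : m ≤ ∑ d ∈ s, d) : ∃ A ⊆ s, ∑ d ∈ A, d = m := by
  obtain ⟨l, hl, rfl⟩ :=
    List.exists_sublist_sum_eq_of_getElem_le_succ_sum_take hs m (by rwa [sum_sort])
  refine ⟨l.toFinset, fun d hd => (mem_sort _).1 (hl.subset (List.mem_toFinset.1 hd)), ?_⟩
  rw [List.sum_toFinset _ (hl.nodup (sort_nodup s _)), List.map_id']

theorem exists_subset_sum_eq_sum_sdiff_of_even {s : Finset ℕ}
    (hs : ∀ m ≤ ∑ d ∈ s, d, ∃ A ⊆ s, ∑ d ∈ A, d = m) (heven : Even (∑ d ∈ s, d)) :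
    ∃ A ⊆ s, ∑ d ∈ A, d = ∑ d ∈ s \ A, d := by
  obtain ⟨k, hk⟩ := heven
  obtain ⟨A, hAs, hA⟩ := hs k (by omega)
  have := sum_sdiff (f := id) hAs
  exact ⟨A, hAs, by simp only [id] at this; omega⟩

end Finset

theorem Nat.getElem_sort_divisors_zero_le_one {n : ℕ} (hn : n ≠ 0)
    (h : 0 < (n.divisors.sort (· ≤ ·)).length) : (n.divisors.sort (· ≤ ·))[0] ≤ 1 := by
  rw [Finset.sorted_zero_eq_min']
  exact Finset.min'_le _ _ (Nat.one_mem_divisors.2 hn)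

theorem stmt13 (n : ℕ) (hn : 0 < n)
    (h : ∀ i : ℕ, (hi : i + 1 < (n.divisors.sort (· ≤ ·)).length) →
      (n.divisors.sort (· ≤ ·))[i + 1]'hi ≤
        2 * (n.divisors.sort (· ≤ ·))[i]'(by omega))
    (hsigma : Even (∑ d ∈ n.divisors, d)) :
    Zumkeller n := by
  have hcomplete := List.getElem_le_succ_sum_take_of_getElem_succ_le_two_mul
    (Nat.getElem_sort_divisors_zero_le_one hn.ne') h
  exact ⟨hn, Finset.exists_subset_sum_eq_sum_sdiff_of_even
    (fun _ hm => Finset.exists_subset_sum_eq_of_getElem_sort_le hcomplete hm) hsigma⟩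
end

section
/- For every integer n ≥ 3, the number n! is a Zumkeller number. -/
/-!
If the divisors of `N` are subset-sum complete (every integer up to `σ(N)` is a sum of distinct
divisors) and `σ(N)` is even, then a set of divisors summing to `σ(N)/2` witnesses that `N` is
Zumkeller.

Completeness is built up one prime power at a time: the divisors of `p^(e+1) m` are those of
`p^e m` together with `p^(e+1)` times those of `m`, and two complete sets `s`, `t` combine to a
complete set `s ∪ c • t` as soon as `c ≤ Σ s + 1`. For `n!` the power of two is at least
`2^(n/2) ≥ n - 1`, which dominates every odd prime factor. Parity comes from a Bertrand prime
`n/2 < p ≤ n`: it divides `n!` exactly once, so `σ(n!)` has the even factor `p + 1`.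
-/

open Finset Nat

def IsSubsetSumComplete (s : Finset ℕ) : Prop :=
  ∀ m ≤ ∑ x ∈ s, x, ∃ t ⊆ s, ∑ x ∈ t, x = m

theorem isSubsetSumComplete_divisors_one : IsSubsetSumComplete (divisors 1) := by
  intro m hm
  rw [divisors_one, sum_singleton] at hm
  interval_cases m
  · exact ⟨∅, empty_subset _, sum_empty⟩
  · exact ⟨{1}, subset_rfl, sum_singleton _ _⟩

namespace IsSubsetSumComplete

variable {s t : Finset ℕ} {c : ℕ}

theorem exists_sum_add_mul_sum (hs : IsSubsetSumComplete s) (ht : IsSubsetSumComplete t)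
    (hc : c ≤ ∑ x ∈ s, x + 1) {m : ℕ} (hm : m ≤ ∑ x ∈ s, x + c * ∑ x ∈ t, x) :
    ∃ a ⊆ s, ∃ b ⊆ t, ∑ x ∈ a, x + c * ∑ x ∈ b, x = m := by
  -- Take `q = min (m / c) (Σ t)` copies of `c`; the remainder is then at most `Σ s`.
  obtain ⟨q, hqt, hqm, hr⟩ : ∃ q ≤ ∑ x ∈ t, x, c * q ≤ m ∧ m - c * q ≤ ∑ x ∈ s, x := by
    rcases le_total (m / c) (∑ x ∈ t, x) with h | h
    · refine ⟨m / c, h, Nat.mul_div_le m c, ?_⟩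
      rcases c.eq_zero_or_pos with rfl | hc0
      · simpa using hm
      · have := Nat.div_add_mod m c
        have := Nat.mod_lt m hc0
        omega
    · exact ⟨_, le_rfl, (Nat.mul_le_mul_left c h).trans (Nat.mul_div_le m c), by omega⟩
  obtain ⟨b, hb, rfl⟩ := ht q hqt
  obtain ⟨a, ha, hsa⟩ := hs _ hr
  exact ⟨a, ha, b, hb, by omega⟩

theorem union_image_mul (hs : IsSubsetSumComplete s) (ht : IsSubsetSumComplete t)
    (hc : c ≤ ∑ x ∈ s, x + 1) (hc0 : 0 < c) (hdisj : Disjoint s (t.image (c * ·))) :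
    IsSubsetSumComplete (s ∪ t.image (c * ·)) := by
  have sum_image_mul (b : Finset ℕ) : ∑ x ∈ b.image (c * ·), x = c * ∑ x ∈ b, x := by
    rw [sum_image fun x _ y _ h => mul_right_injective₀ hc0.ne' h, mul_sum]
  intro m hm
  rw [sum_union hdisj, sum_image_mul] at hm
  obtain ⟨a, ha, b, hb, rfl⟩ := hs.exists_sum_add_mul_sum ht hc hm
  refine ⟨a ∪ b.image (c * ·), union_subset_union ha (image_subset_image hb), ?_⟩
  rw [sum_union (hdisj.mono ha (image_subset_image hb)), sum_image_mul]

end IsSubsetSumComplete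

theorem Nat.divisors_prime_pow_succ_mul {p m : ℕ} (hp : p.Prime) (hm : m ≠ 0) (e : ℕ) :
    (p ^ (e + 1) * m).divisors = (p ^ e * m).divisors ∪ m.divisors.image (p ^ (e + 1) * ·) := by
  have hne : p ^ (e + 1) * m ≠ 0 := mul_ne_zero (pow_ne_zero _ hp.ne_zero) hm
  ext x
  simp only [mem_union, mem_image, mem_divisors, ne_eq, hne, hm, not_false_eq_true, and_true,
    mul_eq_zero, pow_eq_zero_iff', hp.ne_zero, false_and, or_false]
  constructor
  · intro hx
    obtain ⟨y, z, hy, hz, rfl⟩ := Nat.dvd_mul.1 hx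
    obtain ⟨i, hi, rfl⟩ := (Nat.dvd_prime_pow hp).1 hy
    rcases hi.lt_or_eq with hi | rfl
    · exact .inl (Nat.mul_dvd_mul (pow_dvd_pow p (by omega)) hz)
    · exact .inr ⟨z, hz, rfl⟩
  · rintro (hx | ⟨d, hd, rfl⟩)
    · exact hx.trans (Nat.mul_dvd_mul_right (pow_dvd_pow p e.le_succ) m)
    · exact Nat.mul_dvd_mul_left _ hd

theorem Nat.disjoint_divisors_prime_pow_mul_image {p m : ℕ} (hp : p.Prime) (hpm : ¬p ∣ m)
    (e : ℕ) : Disjoint (p ^ e * m).divisors (m.divisors.image (p ^ (e + 1) * ·)) := by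
  rw [disjoint_right]
  rintro _ hx hdvd
  obtain ⟨d, -, rfl⟩ := mem_image.1 hx
  have : p ^ (e + 1) ∣ p ^ e * m := (dvd_mul_right _ d).trans (mem_divisors.1 hdvd).1
  rw [pow_succ] at this
  exact hpm (Nat.dvd_of_mul_dvd_mul_left (pow_pos hp.pos e) this)

theorem Nat.prime_pow_succ_le_sum_divisors_add_one {p m : ℕ} (hp : p.Prime) (hpm : ¬p ∣ m)
    (hpσ : p ≤ ∑ d ∈ m.divisors, d + 1) (e : ℕ) :
    p ^ (e + 1) ≤ ∑ d ∈ (p ^ e * m).divisors, d + 1 := by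
  have hcop : (p ^ e).Coprime m := ((hp.coprime_iff_not_dvd).2 hpm).pow_left e
  have geom : (∑ i ∈ range (e + 1), p ^ i) * (p - 1) + 1 = p ^ (e + 1) := by
    simpa [Nat.sub_add_cancel hp.one_le] using geom_sum_mul_add (p - 1) (e + 1)
  rw [hcop.sum_divisors_mul, sum_divisors_prime_pow hp, ← geom]
  gcongr
  omega

theorem IsSubsetSumComplete.divisors_prime_pow_mul {p m : ℕ}
    (hm : IsSubsetSumComplete m.divisors) (hp : p.Prime) (hpm : ¬p ∣ m)
    (hpσ : p ≤ ∑ d ∈ m.divisors, d + 1) (e : ℕ) : IsSubsetSumComplete (p ^ e * m).divisors := by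
  have hm0 : m ≠ 0 := by rintro rfl; exact hpm (dvd_zero p)
  induction e with
  | zero => simpa using hm
  | succ e ih =>
    rw [Nat.divisors_prime_pow_succ_mul hp hm0]
    exact ih.union_image_mul hm (prime_pow_succ_le_sum_divisors_add_one hp hpm hpσ e)
      (pow_pos hp.pos _) (disjoint_divisors_prime_pow_mul_image hp hpm e)

theorem isSubsetSumComplete_divisors_two_pow_mul (a : ℕ) {M : ℕ} (hM : Odd M)
    (hle : ∀ p ∈ M.primeFactors, p ≤ 2 ^ a + 1) : IsSubsetSumComplete (2 ^ a * M).divisors := by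
  induction M using Nat.recOnPrimePow with
  | zero => simp at hM
  | one =>
    simpa using isSubsetSumComplete_divisors_one.divisors_prime_pow_mul prime_two
      (by norm_num) (by simp) a
  | prime_pow_mul M p k hp hpM hk ih =>
    obtain ⟨hpk, hM⟩ := Nat.odd_mul.1 hM
    have hp2 : p ≠ 2 := by
      rintro rfl
      exact (Nat.not_even_iff_odd.2 hpk) (even_two.pow_of_ne_zero hk.ne')
    have hM0 : M ≠ 0 := by rintro rfl; simp at hM
    have hpk0 : p ^ k ≠ 0 := pow_ne_zero _ hp.ne_zero
    have hpa : p ≤ 2 ^ a + 1 :=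
      hle p (mem_primeFactors.2 ⟨hp, dvd_mul_of_dvd_left (dvd_pow_self p hk.ne') M,
        mul_ne_zero hpk0 hM0⟩)
    have ihM := ih hM fun q hq => hle q (primeFactors_mono (dvd_mul_left M _)
      (mul_ne_zero hpk0 hM0) hq)
    rw [mul_left_comm]
    refine ihM.divisors_prime_pow_mul hp ?_ ?_ k
    · rw [hp.dvd_mul, not_or]
      exact ⟨fun h => hp2 ((prime_dvd_prime_iff_eq hp prime_two).1 (hp.dvd_of_dvd_pow h)), hpM⟩
    · have h2M : 2 ^ a ≤ 2 ^ a * M := Nat.le_mul_of_pos_right _ (pos_of_ne_zero hM0)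
      have := sum_divisors_eq_sum_properDivisors_add_self (n := 2 ^ a * M)
      omega

theorem Nat.two_mul_le_two_pow : ∀ k : ℕ, 2 * k ≤ 2 ^ k
  | 0 => by norm_num
  | 1 => by norm_num
  | k + 2 => by
    have := Nat.two_mul_le_two_pow (k + 1)
    rw [pow_succ]
    omega

theorem Nat.le_two_pow_factorization_factorial_add_one (n : ℕ) :
    n ≤ 2 ^ (n !).factorization 2 + 1 := by
  have hdvd : (2 * (n / 2))! ∣ n ! := factorial_dvd_factorial (Nat.mul_div_le n 2)
  have hv : n / 2 ≤ (n !).factorization 2 := by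
    have := (factorization_le_iff_dvd (factorial_ne_zero _) (factorial_ne_zero _)).2 hdvd 2
    rw [factorization_factorial_mul prime_two] at this
    omega
  have := Nat.two_mul_le_two_pow (n / 2)
  have := Nat.pow_le_pow_right two_pos hv
  omega

theorem isSubsetSumComplete_divisors_factorial (n : ℕ) : IsSubsetSumComplete (n !).divisors := by
  rw [← ordProj_mul_ordCompl_eq_self n ! 2]
  refine isSubsetSumComplete_divisors_two_pow_mul _ ?_ fun p hp => ?_
  · exact Nat.odd_iff.2 (Nat.two_dvd_ne_zero.1 (not_dvd_ordCompl prime_two (factorial_ne_zero n)))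
  · have hpn : p ≤ n := (prime_of_mem_primeFactors hp).dvd_factorial.1
      ((dvd_of_mem_primeFactors hp).trans (ordCompl_dvd _ _))
    exact hpn.trans (le_two_pow_factorization_factorial_add_one n)

theorem Nat.factorization_factorial_eq_one {n p : ℕ} (hp : p.Prime) (hpn : p ≤ n)
    (hnp : n < 2 * p) : (n !).factorization p = 1 := by
  have hsq : n < p ^ 2 := by nlinarith [hp.two_le]
  have hlog : log p n < 2 := log_lt_of_lt_pow (by omega) hsq
  rw [factorization_factorial hp hlog, show Ico 1 2 = {1} from rfl, sum_singleton, pow_one,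
    Nat.div_eq_of_lt_le (k := 1) (by omega) (by omega)]

theorem even_sum_divisors_of_factorization_eq_one {N p : ℕ} (hp : p.Prime) (hp2 : p ≠ 2)
    (h : N.factorization p = 1) : Even (∑ d ∈ N.divisors, d) := by
  have hN : N ≠ 0 := by rintro rfl; simp at h
  have hsplit := ordProj_mul_ordCompl_eq_self N p
  have hcop := coprime_ordCompl hp hN
  rw [h, pow_one] at hsplit hcop
  rw [← hsplit, hcop.sum_divisors_mul, hp.sum_divisors]
  exact (hp.odd_of_ne_two hp2).add_one.mul_right _

theorem even_sum_divisors_factorial {n : ℕ} (hn : 3 ≤ n) : Even (∑ d ∈ (n !).divisors, d) := by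
  obtain rfl | hn4 := hn.eq_or_lt
  · decide
  -- A Bertrand prime `n / 2 < p ≤ n` is odd once `n ≥ 4`, and divides `n!` exactly once.
  obtain ⟨p, hp, hlt, hle⟩ := exists_prime_lt_and_le_two_mul (n / 2) (by omega)
  exact even_sum_divisors_of_factorization_eq_one hp (by omega)
    (factorization_factorial_eq_one hp (by omega) (by omega))

theorem zumkeller_of_isSubsetSumComplete {N : ℕ} (hN : 0 < N)
    (hc : IsSubsetSumComplete N.divisors) (he : Even (∑ d ∈ N.divisors, d)) : Zumkeller N := by
  obtain ⟨k, hk⟩ := he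
  obtain ⟨A, hA, hAk⟩ := hc k (by omega)
  refine ⟨hN, A, hA, ?_⟩
  have := sum_sdiff hA (f := fun d => d)
  omega

open Nat in
theorem stmt14 (n : ℕ) (hn : 3 ≤ n) : Zumkeller (n !) :=
  zumkeller_of_isSubsetSumComplete n.factorial_pos (isSubsetSumComplete_divisors_factorial n)
    (even_sum_divisors_factorial hn)
end

section
/- Let n be an odd Zumkeller number. Then the product over the distinct prime divisors p of n of p/(p−1) is at least 2, and n has at least 3 distinct prime divisors. -/
/-!
A Zumkeller number satisfies `σ(n) ≥ 2n`: both parts sum to `σ(n)/2` and `n` lies in one of them.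
On the other hand `σ(p^k) ≤ p^k · p/(p-1)` (the geometric series), so by multiplicativity
`σ(n)/n ≤ ∏ p/(p-1)`. If `n` is odd with at most two prime factors `p < q`, then `p ≥ 3`,
`q ≥ 5` and the product is at most `(3/2)(5/4) < 2`.
-/

open Finset

theorem Zumkeller.two_mul_le_sum_divisors {n : ℕ} (hz : Zumkeller n) :
    2 * n ≤ ∑ d ∈ n.divisors, d := by
  obtain ⟨hn, A, hA, hsum⟩ := hz
  have htotal : ∑ d ∈ n.divisors \ A, d + ∑ d ∈ A, d = ∑ d ∈ n.divisors, d := sum_sdiff hA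
  have hn_le_part : n ≤ ∑ d ∈ A, d ∨ n ≤ ∑ d ∈ n.divisors \ A, d := by
    by_cases h : n ∈ A
    · exact .inl (single_le_sum (f := id) (fun _ _ => Nat.zero_le _) h)
    · exact .inr (single_le_sum (f := id) (fun _ _ => Nat.zero_le _)
        (mem_sdiff.mpr ⟨Nat.mem_divisors_self n hn.ne', h⟩))
  omega

theorem geom_sum_le_pow_mul_div_sub_one {K : Type*} [Field K] [LinearOrder K]
    [IsStrictOrderedRing K] {x : K} (hx : 1 < x) (k : ℕ) :
    ∑ i ∈ range (k + 1), x ^ i ≤ x ^ k * (x / (x - 1)) := by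
  rw [mul_div_assoc', le_div_iff₀ (sub_pos.mpr hx), geom_sum_mul, pow_succ]
  linarith

theorem sum_divisors_le_mul_prod_primeFactors (n : ℕ) :
    (∑ d ∈ n.divisors, d : ℚ) ≤ n * ∏ p ∈ n.primeFactors, (p : ℚ) / (p - 1) := by
  rcases eq_or_ne n 0 with rfl | hn
  · simp
  have hn_eq : (n : ℚ) = ∏ p ∈ n.primeFactors, (p : ℚ) ^ n.factorization p := by
    exact_mod_cast Nat.prod_primeFactors_pow_factorization hn
  rw [← Nat.cast_sum, Nat.sum_divisors hn, hn_eq, ← prod_mul_distrib]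
  push_cast
  refine prod_le_prod (fun p _ => by positivity) fun p hp => ?_
  exact geom_sum_le_pow_mul_div_sub_one
    (by exact_mod_cast (Nat.prime_of_mem_primeFactors hp).one_lt) _

theorem Zumkeller.two_le_prod_primeFactors {n : ℕ} (hz : Zumkeller n) :
    2 ≤ ∏ p ∈ n.primeFactors, (p : ℚ) / (p - 1) := by
  have hn : (0 : ℚ) < n := by exact_mod_cast hz.1
  refine le_of_mul_le_mul_left ?_ hn
  calc (n : ℚ) * 2 = (2 * n : ℕ) := by push_cast; ring
    _ ≤ (∑ d ∈ n.divisors, d : ℕ) := Nat.cast_le.mpr hz.two_mul_le_sum_divisors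
    _ = ∑ d ∈ n.divisors, (d : ℚ) := Nat.cast_sum _ _
    _ ≤ n * ∏ p ∈ n.primeFactors, (p : ℚ) / (p - 1) := sum_divisors_le_mul_prod_primeFactors n

theorem div_sub_one_le_div_sub_one {K : Type*} [Field K] [LinearOrder K]
    [IsStrictOrderedRing K] {a b : K} (ha : 1 < a) (hab : a ≤ b) :
    b / (b - 1) ≤ a / (a - 1) := by
  rw [div_le_div_iff₀ (by linarith) (by linarith)]
  linarith

theorem div_sub_one_le_three_halves {p : ℕ} (hp : Odd p) (hp1 : 1 < p) :
    (p : ℚ) / (p - 1) ≤ 3 / 2 := by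
  have h3 : (3 : ℚ) ≤ p := by
    obtain ⟨k, rfl⟩ := hp
    exact_mod_cast (by omega : 3 ≤ 2 * k + 1)
  have h := div_sub_one_le_div_sub_one (by norm_num) h3
  norm_num at h
  exact h

theorem div_sub_one_mul_div_sub_one_lt_two {p q : ℕ} (hp : Odd p) (hp1 : 1 < p) (hq : Odd q)
    (hpq : p < q) : (p : ℚ) / (p - 1) * ((q : ℚ) / (q - 1)) < 2 := by
  have hq5 : (5 : ℚ) ≤ q := by
    obtain ⟨k, rfl⟩ := hp
    obtain ⟨l, rfl⟩ := hq
    exact_mod_cast (by omega : 5 ≤ 2 * l + 1)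
  have hq_le : (q : ℚ) / (q - 1) ≤ 5 / 4 := by
    have h := div_sub_one_le_div_sub_one (by norm_num) hq5
    norm_num at h
    exact h
  have hq_pos : (0 : ℚ) ≤ q / (q - 1) := div_nonneg (by linarith) (by linarith)
  calc (p : ℚ) / (p - 1) * ((q : ℚ) / (q - 1)) ≤ 3 / 2 * (5 / 4) :=
        mul_le_mul (div_sub_one_le_three_halves hp hp1) hq_le hq_pos (by norm_num)
    _ < 2 := by norm_num

theorem prod_div_sub_one_lt_two_of_odd {s : Finset ℕ} (hs : ∀ p ∈ s, Odd p ∧ 1 < p)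
    (hcard : s.card ≤ 2) : ∏ p ∈ s, (p : ℚ) / (p - 1) < 2 := by
  interval_cases h : s.card
  · simp [card_eq_zero.mp h]
  · obtain ⟨p, rfl⟩ := card_eq_one.mp h
    obtain ⟨hp, hp1⟩ := hs p (mem_singleton_self p)
    rw [prod_singleton]
    linarith [div_sub_one_le_three_halves hp hp1]
  · obtain ⟨p, q, hne, rfl⟩ := card_eq_two.mp h
    obtain ⟨hp, hp1⟩ := hs p (by simp)
    obtain ⟨hq, hq1⟩ := hs q (by simp)
    rw [prod_pair hne]
    rcases hne.lt_or_gt with hpq | hqp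
    · exact div_sub_one_mul_div_sub_one_lt_two hp hp1 hq hpq
    · rw [mul_comm]
      exact div_sub_one_mul_div_sub_one_lt_two hq hq1 hp hqp

theorem stmt15 (n : ℕ) (hodd : Odd n) (hz : Zumkeller n) :
    (2 ≤ ∏ p ∈ n.primeFactors, (p : ℚ) / (p - 1)) ∧ 3 ≤ n.primeFactors.card := by
  have hprod := hz.two_le_prod_primeFactors
  refine ⟨hprod, ?_⟩
  by_contra! hcard
  have hfactors : ∀ p ∈ n.primeFactors, Odd p ∧ 1 < p := fun p hp =>
    ⟨hodd.of_dvd_nat (Nat.dvd_of_mem_primeFactors hp), (Nat.prime_of_mem_primeFactors hp).one_lt⟩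
  exact (prod_div_sub_one_lt_two_of_odd hfactors (by omega)).not_ge hprod
end

section
/- If n is an even half-Zumkeller number, then n is a Zumkeller number. -/
namespace Finset

variable {ι M : Type*} [DecidableEq ι] [AddCommMonoid M] {f : ι → M} {s A : Finset ι} {x y : ι}

theorem exists_mem_subset_sum_eq_sum_sdiff (hA : A ⊆ s) (h : ∑ i ∈ A, f i = ∑ i ∈ s \ A, f i)
    (hx : x ∈ s) : ∃ B ⊆ s, x ∈ B ∧ ∑ i ∈ B, f i = ∑ i ∈ s \ B, f i := by
  by_cases hxA : x ∈ A
  · exact ⟨A, hA, hxA, h⟩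
  · refine ⟨s \ A, sdiff_subset, mem_sdiff.mpr ⟨hx, hxA⟩, ?_⟩
    rw [sdiff_sdiff_eq_self hA]
    exact h.symm

theorem sum_insert_erase_eq_sum_sdiff (hA : A ⊆ s) (hx : x ∈ A) (hy : y ∉ s)
    (hxy : f x + f x = f y) (h : ∑ i ∈ A, f i = ∑ i ∈ s \ A, f i) :
    ∑ i ∈ insert y (A.erase x), f i = ∑ i ∈ insert y s \ insert y (A.erase x), f i := by
  have hyA : y ∉ A.erase x := fun hy' => hy (hA (mem_of_mem_erase hy'))
  have hxA : x ∉ s \ A := fun hx' => (mem_sdiff.mp hx').2 hx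
  have hcompl : insert y s \ insert y (A.erase x) = insert x (s \ A) := by
    ext i
    simp only [mem_sdiff, mem_insert, mem_erase]
    by_cases hix : i = x
    · subst hix
      have hiy : i ≠ y := fun h => hy (h ▸ hA hx)
      simp [hx, hA hx, hiy]
    · by_cases hiy : i = y
      · subst hiy
        simp [hy, hix]
      · simp [hix, hiy]
  calc ∑ i ∈ insert y (A.erase x), f i
      = f x + (f x + ∑ i ∈ A.erase x, f i) := by rw [sum_insert hyA, ← hxy, add_assoc]
    _ = f x + ∑ i ∈ s \ A, f i := by rw [add_sum_erase A f hx, h]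
    _ = ∑ i ∈ insert y s \ insert y (A.erase x), f i := by rw [hcompl, sum_insert hxA]

end Finset

theorem stmt17 (n : ℕ) (heven : Even n) (hh : HalfZumkeller n) : Zumkeller n := by
  obtain ⟨hn, A, hA, hsum⟩ := hh
  have hhalf : n / 2 ∈ n.properDivisors :=
    Nat.mem_properDivisors.mpr ⟨Nat.div_dvd_of_dvd heven.two_dvd, Nat.div_lt_self hn one_lt_two⟩
  obtain ⟨B, hB, hhalfB, hBsum⟩ := Finset.exists_mem_subset_sum_eq_sum_sdiff hA hsum hhalf
  have hdiv : n.divisors = insert n n.properDivisors := (Nat.insert_self_properDivisors hn.ne').symm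
  refine ⟨hn, insert n (B.erase (n / 2)), ?_, ?_⟩
  · rw [hdiv]
    exact Finset.insert_subset_insert _ ((Finset.erase_subset _ _).trans hB)
  · rw [hdiv]
    exact Finset.sum_insert_erase_eq_sum_sdiff hB hhalfB Nat.self_notMem_properDivisors
      ((two_mul _).symm.trans (Nat.two_mul_div_two_of_even heven)) hBsum
end

section
/- If n is an even Zumkeller number with σ(n) < 3n, then n is a half-Zumkeller number. -/
open Finset

theorem Finset.sum_insert_erase_eq_sum_erase_sdiff {ι M : Type*} [DecidableEq ι]
    [AddCancelCommMonoid M] {s A : Finset ι} {f : ι → M} {a b : ι} (ha : a ∈ A)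
    (hb : b ∈ s \ A) (hab : f a = f b + f b) (h : ∑ i ∈ A, f i = ∑ i ∈ s \ A, f i) :
    ∑ i ∈ insert b (A.erase a), f i = ∑ i ∈ s.erase a \ insert b (A.erase a), f i := by
  have hba : b ≠ a := fun hba => (mem_sdiff.1 hb).2 (hba ▸ ha)
  have hcompl : s.erase a \ insert b (A.erase a) = (s \ A).erase b := by
    ext i
    simp only [mem_sdiff, mem_erase, mem_insert]
    constructor
    · rintro ⟨⟨hia, his⟩, hi⟩
      exact ⟨fun hib => hi (Or.inl hib), his, fun hiA => hi (Or.inr ⟨hia, hiA⟩)⟩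
    · rintro ⟨hib, his, hiA⟩
      exact ⟨⟨fun hia => hiA (hia ▸ ha), his⟩, by tauto⟩
  rw [hcompl, sum_insert fun hb' => (mem_sdiff.1 hb).2 (mem_of_mem_erase hb')]
  rw [← add_sum_erase A f ha, ← add_sum_erase (s \ A) f hb, hab, add_assoc] at h
  exact add_left_cancel h

theorem Nat.properDivisors_eq_erase_divisors (n : ℕ) :
    n.properDivisors = n.divisors.erase n := by
  ext d
  simp only [Nat.mem_properDivisors, mem_erase, Nat.mem_divisors]
  constructor
  · rintro ⟨hd, hdn⟩
    exact ⟨hdn.ne, hd, by omega⟩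
  · rintro ⟨hdn, hd, hn⟩
    exact ⟨hd, (Nat.le_of_dvd (Nat.pos_of_ne_zero hn) hd).lt_of_ne hdn⟩

theorem Zumkeller.exists_partition_self_mem {n : ℕ} (hz : Zumkeller n) :
    ∃ A ⊆ n.divisors, n ∈ A ∧ ∑ d ∈ A, d = ∑ d ∈ n.divisors \ A, d := by
  obtain ⟨hn, A, hA, hsum⟩ := hz
  by_cases hnA : n ∈ A
  · exact ⟨A, hA, hnA, hsum⟩
  · refine ⟨n.divisors \ A, sdiff_subset, mem_sdiff.2 ⟨Nat.mem_divisors_self n hn.ne', hnA⟩, ?_⟩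
    rw [Finset.sdiff_sdiff_eq_self hA, hsum]

theorem half_notMem_of_sum_divisors_lt_three_mul {k : ℕ} {A : Finset ℕ}
    (hA : A ⊆ (k + k).divisors) (hnA : k + k ∈ A)
    (hsum : ∑ d ∈ A, d = ∑ d ∈ (k + k).divisors \ A, d)
    (hsigma : ∑ d ∈ (k + k).divisors, d < 3 * (k + k)) : k ∉ A := by
  intro hkA
  have hk : 0 < k := Nat.pos_of_mem_divisors (hA hkA)
  have hpair : k + k + k ≤ ∑ d ∈ A, d := by
    have := sum_le_sum_of_subset (f := id) (insert_subset_iff.2 ⟨hnA, singleton_subset_iff.2 hkA⟩)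
    rwa [sum_pair (by omega : k + k ≠ k)] at this
  have htotal := sum_sdiff (f := id) hA
  simp only [id] at hpair htotal
  omega

theorem stmt18 (n : ℕ) (heven : Even n) (hz : Zumkeller n)
    (hsigma : (∑ d ∈ n.divisors, d) < 3 * n) : HalfZumkeller n := by
  obtain ⟨A, hA, hnA, hsum⟩ := hz.exists_partition_self_mem
  obtain ⟨k, rfl⟩ := heven
  have hk : k ∈ (k + k).divisors \ A :=
    mem_sdiff.2 ⟨Nat.mem_divisors.2 ⟨Dvd.intro_left 2 (two_mul k), hz.1.ne'⟩,
      half_notMem_of_sum_divisors_lt_three_mul hA hnA hsum hsigma⟩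
  have hkn : k ≠ k + k := by have := hz.1; omega
  refine ⟨hz.1, insert k (A.erase (k + k)), ?_, ?_⟩ <;> rw [Nat.properDivisors_eq_erase_divisors]
  · exact insert_subset (mem_erase.2 ⟨hkn, (mem_sdiff.1 hk).1⟩) (erase_subset_erase _ hA)
  · exact sum_insert_erase_eq_sum_erase_sdiff hnA hk rfl hsum
end

section
/- If n is a Zumkeller number, then 2n is a half-Zumkeller number. -/
/-!
Write `H` for the divisors `d` of `n` with `n / d` odd; the divisors of `2n` are those of `n`
together with the doubles of the elements of `H`. Take a Zumkeller partition `A ⊔ B` of the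
divisors of `n` with `n ∈ A`. Replacing `A` by `(A ∆ H) ∪ 2(A ∩ H)` adds `∑ H` to its sum, so it
becomes a Zumkeller partition of `2n` which contains `2n` but not `n`. Dropping `2n` and moving
`n` across then balances the proper divisors of `2n`: each side now sums to `σ(2n)/2 - n`.
-/

open Finset
open scoped symmDiff

theorem Finset.sum_eq_sum_sdiff_iff_two_nsmul {ι M : Type*} [AddCancelCommMonoid M]
    [DecidableEq ι]
    {s A : Finset ι} (f : ι → M) (hA : A ⊆ s) :
    ∑ i ∈ A, f i = ∑ i ∈ s \ A, f i ↔ 2 • ∑ i ∈ A, f i = ∑ i ∈ s, f i := by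
  rw [← sum_sdiff hA, two_nsmul]
  exact (add_left_inj _).symm

theorem Finset.sum_symmDiff_add_sum_inter_add_sum_inter {ι M : Type*} [AddCommMonoid M]
    [DecidableEq ι] (s t : Finset ι) (f : ι → M) :
    ∑ i ∈ s ∆ t, f i + ∑ i ∈ s ∩ t, f i + ∑ i ∈ s ∩ t, f i =
      ∑ i ∈ s, f i + ∑ i ∈ t, f i := by
  rw [symmDiff_eq_sup_sdiff_inf, sup_eq_union, inf_eq_inter,
    sum_sdiff (inter_subset_left.trans subset_union_left), sum_union_inter]

theorem halfZumkeller_iff {n : ℕ} :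
    HalfZumkeller n ↔
      0 < n ∧ ∃ A ⊆ n.properDivisors, 2 * ∑ d ∈ A, d = ∑ d ∈ n.properDivisors, d := by
  simp_rw [HalfZumkeller, ← smul_eq_mul]
  exact and_congr_right fun _ => exists_congr fun A => and_congr_right
    (sum_eq_sum_sdiff_iff_two_nsmul _)

theorem Zumkeller.exists_self_mem {n : ℕ} (hz : Zumkeller n) :
    ∃ A ⊆ n.divisors, n ∈ A ∧ 2 * ∑ d ∈ A, d = ∑ d ∈ n.divisors, d := by
  obtain ⟨hn, A, hA, hsum⟩ := hz
  have hself : n ∈ n.divisors := Nat.mem_divisors_self n hn.ne'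
  by_cases hnA : n ∈ A
  · exact ⟨A, hA, hnA, (sum_eq_sum_sdiff_iff_two_nsmul _ hA).1 hsum⟩
  · refine ⟨n.divisors \ A, sdiff_subset, mem_sdiff.2 ⟨hself, hnA⟩, ?_⟩
    rw [← smul_eq_mul, ← sum_eq_sum_sdiff_iff_two_nsmul _ sdiff_subset,
      Finset.sdiff_sdiff_eq_self hA]
    exact hsum.symm

/-- The divisors `d` of `n` with `n / d` odd. -/
def oddCofactorDivisors (n : ℕ) : Finset ℕ := n.divisors.filter fun d => ¬ 2 * d ∣ n

theorem oddCofactorDivisors_subset (n : ℕ) : oddCofactorDivisors n ⊆ n.divisors :=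
  filter_subset _ _

theorem self_mem_oddCofactorDivisors {n : ℕ} (hn : 0 < n) : n ∈ oddCofactorDivisors n :=
  mem_filter.2 ⟨Nat.mem_divisors_self n hn.ne', fun h => by have := Nat.le_of_dvd hn h; omega⟩

theorem disjoint_divisors_image_oddCofactorDivisors (n : ℕ) :
    Disjoint n.divisors ((oddCofactorDivisors n).image (2 * ·)) := by
  rw [disjoint_right]
  rintro _ hd hd'
  obtain ⟨e, he, rfl⟩ := mem_image.1 hd
  exact (mem_filter.1 he).2 (Nat.dvd_of_mem_divisors hd')

theorem divisors_two_mul (n : ℕ) :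
    (2 * n).divisors = n.divisors ∪ (oddCofactorDivisors n).image (2 * ·) := by
  ext d
  simp only [oddCofactorDivisors, mem_union, mem_image, mem_filter, Nat.mem_divisors]
  constructor
  · rintro ⟨hd, hn⟩
    by_cases h : d ∣ n
    · exact Or.inl ⟨h, by omega⟩
    · obtain ⟨e, rfl⟩ : 2 ∣ d := by
        rcases Nat.even_or_odd d with he | ho
        · exact he.two_dvd
        · exact absurd ((Nat.coprime_two_right.2 ho).dvd_of_dvd_mul_left hd) h
      exact Or.inr ⟨e, ⟨⟨Nat.dvd_of_mul_dvd_mul_left two_pos hd, by omega⟩, h⟩, rfl⟩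
  · rintro (⟨h, hn⟩ | ⟨e, ⟨⟨he, hn⟩, -⟩, rfl⟩)
    · exact ⟨h.mul_left 2, by omega⟩
    · exact ⟨mul_dvd_mul_left 2 he, by omega⟩

theorem sum_image_two_mul (s : Finset ℕ) : ∑ d ∈ s.image (2 * ·), d = 2 * ∑ d ∈ s, d := by
  rw [sum_image fun _ _ _ _ => Nat.eq_of_mul_eq_mul_left two_pos, mul_sum]

theorem sum_divisors_two_mul (n : ℕ) :
    ∑ d ∈ (2 * n).divisors, d = ∑ d ∈ n.divisors, d + 2 * ∑ d ∈ oddCofactorDivisors n, d := by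
  rw [divisors_two_mul, sum_union (disjoint_divisors_image_oddCofactorDivisors n),
    sum_image_two_mul]

theorem exists_balanced_divisors_two_mul {n : ℕ} {A : Finset ℕ} (hA : A ⊆ n.divisors)
    (hnA : n ∈ A) (hsum : 2 * ∑ d ∈ A, d = ∑ d ∈ n.divisors, d) :
    ∃ P ⊆ (2 * n).divisors, 2 * n ∈ P ∧ n ∉ P ∧
      2 * ∑ d ∈ P, d = ∑ d ∈ (2 * n).divisors, d := by
  have hn : 0 < n := Nat.pos_of_mem_divisors (hA hnA)
  set H := oddCofactorDivisors n with hH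
  have hnH : n ∈ H := self_mem_oddCofactorDivisors hn
  have hsymm : A ∆ H ⊆ n.divisors :=
    symmDiff_le_sup.trans (union_subset hA (oddCofactorDivisors_subset n))
  have hdisj : Disjoint (A ∆ H) ((A ∩ H).image (2 * ·)) :=
    (disjoint_divisors_image_oddCofactorDivisors n).mono hsymm
      (image_subset_image inter_subset_right)
  refine ⟨A ∆ H ∪ (A ∩ H).image (2 * ·), ?_, ?_, ?_, ?_⟩
  · rw [divisors_two_mul]
    exact union_subset_union hsymm (image_subset_image inter_subset_right)
  · exact mem_union_right _ (mem_image_of_mem _ (mem_inter.2 ⟨hnA, hnH⟩))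
  · rw [mem_union, not_or, Finset.mem_symmDiff]
    refine ⟨by tauto, fun h => ?_⟩
    exact disjoint_left.1 (disjoint_divisors_image_oddCofactorDivisors n)
      (Nat.mem_divisors_self n hn.ne') (image_subset_image inter_subset_right h)
  · have hsplit := sum_symmDiff_add_sum_inter_add_sum_inter A H (fun d => d)
    rw [sum_union hdisj, sum_image_two_mul, sum_divisors_two_mul, ← hH]
    omega

theorem halfZumkeller_two_mul_of_balanced {m : ℕ} {P : Finset ℕ} (hP : P ⊆ (2 * m).divisors)
    (h2m : 2 * m ∈ P) (hm : m ∉ P) (hsum : 2 * ∑ d ∈ P, d = ∑ d ∈ (2 * m).divisors, d) :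
    HalfZumkeller (2 * m) := by
  have h2m_pos : 0 < 2 * m := Nat.pos_of_mem_divisors (hP h2m)
  refine halfZumkeller_iff.2 ⟨by omega, insert m (P.erase (2 * m)), ?_, ?_⟩
  · refine insert_subset (Nat.mem_properDivisors.2 ⟨dvd_mul_left m 2, by omega⟩) fun d hd => ?_
    obtain ⟨hne, hdP⟩ := mem_erase.1 hd
    have hdvd := Nat.dvd_of_mem_divisors (hP hdP)
    exact Nat.mem_properDivisors.2 ⟨hdvd, lt_of_le_of_ne (Nat.le_of_dvd (by omega) hdvd) hne⟩
  · have herase := add_sum_erase P (fun d => d) h2m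
    rw [Nat.sum_divisors_eq_sum_properDivisors_add_self] at hsum
    rw [sum_insert fun h => hm (mem_of_mem_erase h)]
    omega

theorem stmt19 (n : ℕ) (hz : Zumkeller n) : HalfZumkeller (2 * n) := by
  obtain ⟨A, hA, hnA, hsum⟩ := hz.exists_self_mem
  obtain ⟨P, hP, h2n, hn, hPsum⟩ := exists_balanced_divisors_two_mul hA hnA hsum
  exact halfZumkeller_two_mul_of_balanced hP h2n hn hPsum
end
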